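/- (Theorem: single-server protocol satisfies blindness condition (S1).) Fix L ≥ 1 and for each l : Fin L let ρ_l : ZMod 8 → Matrix (Fin 16) (Fin 16) ℂ be either the Z-Dango family ρ_Z or the X-Dango family ρ_X. Let K be a nonempty finite subset of (Fin L → ZMod 8). Then for every POVM Π : Fin m → Matrix ((Fin L → Fin 16)) ((Fin L → Fin 16)) ℂ on the tensor-product space, every θ ∈ K, every φ : Fin L → ZMod 8, and every j with nonzero denominator, [Σ_{r : Fin L → ZMod 2} Tr(Π j · ⊗_l ρ_l(φ l − θ l − 4·(r l)))] / [Σ_{θ' ∈ K} Σ_{r} Tr(Π j · ⊗_l ρ_l(φ l − θ' l − 4·(r l)))] = 1/|K|; that is, given everything Bob observes (the announced angles φ and any POVM outcome on all the Dango states he received), the posterior distribution of Alice's secret computational angles, supported on K, is uniform on K. -/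
import Mathlib


open Matrix Complex
open scoped ComplexConjugate ComplexOrder

noncomputable section

/-- index type of the four-qubit space `(ℂ²)^{⊗4}` -/
abbrev Q4 : Type := Fin 2 × Fin 2 × Fin 2 × Fin 2

/-- Bell state `η₁ = (|00⟩+|11⟩)/√2` -/
def bell1 : Fin 2 × Fin 2 → ℂ := fun p =>
  if p = ((0 : Fin 2), (0 : Fin 2)) then ((1 / Real.sqrt 2 : ℝ) : ℂ)
  else if p = (1, 1) then ((1 / Real.sqrt 2 : ℝ) : ℂ) else 0

/-- Bell state `η₂ = (|00⟩−|11⟩)/√2` -/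
def bell2 : Fin 2 × Fin 2 → ℂ := fun p =>
  if p = ((0 : Fin 2), (0 : Fin 2)) then ((1 / Real.sqrt 2 : ℝ) : ℂ)
  else if p = (1, 1) then -((1 / Real.sqrt 2 : ℝ) : ℂ) else 0

/-- Bell state `η₃ = (|10⟩+|01⟩)/√2` -/
def bell3 : Fin 2 × Fin 2 → ℂ := fun p =>
  if p = ((1 : Fin 2), (0 : Fin 2)) then ((1 / Real.sqrt 2 : ℝ) : ℂ)
  else if p = (0, 1) then ((1 / Real.sqrt 2 : ℝ) : ℂ) else 0

/-- Bell state `η₄ = (|10⟩−|01⟩)/√2` -/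
def bell4 : Fin 2 × Fin 2 → ℂ := fun p =>
  if p = ((1 : Fin 2), (0 : Fin 2)) then ((1 / Real.sqrt 2 : ℝ) : ℂ)
  else if p = (0, 1) then -((1 / Real.sqrt 2 : ℝ) : ℂ) else 0

/-- outer product `|v⟩⟨w|` -/
def outer {n : Type*} (v w : n → ℂ) : Matrix n n ℂ :=
  Matrix.of fun i j => v i * conj (w j)

/-- the two-qubit phase gate `T_Z(ξ)`: `|00⟩↦|00⟩`, `|01⟩↦e^{iξ}|01⟩`, `|10⟩↦|10⟩`, `|11⟩↦|11⟩` -/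
def TZ (ξ : ℝ) : Matrix (Fin 2 × Fin 2) (Fin 2 × Fin 2) ℂ :=
  Matrix.diagonal fun p =>
    if p = ((0 : Fin 2), (1 : Fin 2)) then Complex.exp (Complex.I * ξ) else 1

/-- the two-qubit gate `T_X(ξ)` -/
def TX (ξ : ℝ) : Matrix (Fin 2 × Fin 2) (Fin 2 × Fin 2) ℂ :=
  ((1 + Complex.exp (Complex.I * ξ)) / 2) • (outer bell2 bell2 + outer bell4 bell4)
    + ((1 - Complex.exp (Complex.I * ξ)) / 2) • (outer bell2 bell4 + outer bell4 bell2)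
    + outer bell1 bell1 + outer bell3 bell3

/-- `I₂ ⊗ T ⊗ I₂`, the middle operator acting on qubits 2,3 of qubits 1,2,3,4 -/
def mid (T : Matrix (Fin 2 × Fin 2) (Fin 2 × Fin 2) ℂ) : Matrix Q4 Q4 ℂ :=
  Matrix.of fun a b =>
    (if a.1 = b.1 then (1 : ℂ) else 0) * T (a.2.1, a.2.2.1) (b.2.1, b.2.2.1) *
      (if a.2.2.2 = b.2.2.2 then 1 else 0)

/-- `|η₁⟩ ⊗ |η₁⟩`, the first Bell pair on qubits 1,2 and the second on qubits 3,4 -/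
def bellPair : Q4 → ℂ := fun a => bell1 (a.1, a.2.1) * bell1 (a.2.2.1, a.2.2.2)

/-- the filtering operator `Π = I₂ ⊗ (I₄ − |η₁⟩⟨η₁|) ⊗ I₂` -/
def filterOp : Matrix Q4 Q4 ℂ := mid (1 - outer bell1 bell1)

/-- the Z-Dango vector `D_Z(ξ)` -/
def DZ (ξ : ℝ) : Q4 → ℂ := filterOp.mulVec ((mid (TZ ξ)).mulVec bellPair)

/-- the X-Dango vector `D_X(ξ)` -/
def DX (ξ : ℝ) : Q4 → ℂ := filterOp.mulVec ((mid (TX ξ)).mulVec bellPair)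

/-- identification `(ℂ²)^{⊗4} ≅ ℂ^{16}` -/
def q4Equiv : Q4 ≃ Fin 16 :=
  ((Equiv.prodCongr (Equiv.refl (Fin 2))
        ((Equiv.prodCongr (Equiv.refl (Fin 2)) finProdFinEquiv).trans finProdFinEquiv)).trans
      finProdFinEquiv).trans (finCongr (by norm_num))

/-- the angle `kπ/4` encoded by `k : ZMod 8` -/
def angle (k : ZMod 8) : ℝ := (k.val : ℝ) * Real.pi / 4

/-- `D_Z(ξ)` as a vector in `ℂ^{16}` -/
def DZ16 (ξ : ℝ) : Fin 16 → ℂ := fun x => DZ ξ (q4Equiv.symm x)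

/-- `D_X(ξ)` as a vector in `ℂ^{16}` -/
def DX16 (ξ : ℝ) : Fin 16 → ℂ := fun x => DX ξ (q4Equiv.symm x)

/-- the Z-Dango projector family `ρ_Z(k) = |D_Z(kπ/4)⟩⟨D_Z(kπ/4)|` -/
def rhoZ (k : ZMod 8) : Matrix (Fin 16) (Fin 16) ℂ :=
  outer (DZ16 (angle k)) (DZ16 (angle k))

/-- the X-Dango projector family `ρ_X(k) = |D_X(kπ/4)⟩⟨D_X(kπ/4)|` -/
def rhoX (k : ZMod 8) : Matrix (Fin 16) (Fin 16) ℂ :=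
  outer (DX16 (angle k)) (DX16 (angle k))

/-- `4·r`: the map `ZMod 2 → ZMod 8` sending `0 ↦ 0`, `1 ↦ 4` -/
def pad (r : ZMod 2) : ZMod 8 := 4 * (r.val : ZMod 8)

end

/-- tensor product of a family of matrices on `ℂ^{16}`: the matrix indexed by functions
`x y : Fin L → Fin 16` with entries `∏ l, M l (x l) (y l)` -/
def tensorPow {L : ℕ} (M : Fin L → Matrix (Fin 16) (Fin 16) ℂ) :
    Matrix (Fin L → Fin 16) (Fin L → Fin 16) ℂ :=
  Matrix.of fun x y => ∏ l, M l (x l) (y l)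

noncomputable section Blindness

open Matrix Complex
open scoped ComplexConjugate

lemma exp_mul_conj (ξ : ℝ) :
    Complex.exp (Complex.I * ξ) * conj (Complex.exp (Complex.I * ξ)) = 1 := by
  rw [← Complex.exp_conj, ← Complex.exp_add]
  have : (Complex.I * ξ) + conj (Complex.I * ξ) = 0 := by
    simp [_root_.map_mul, Complex.conj_ofReal, Complex.conj_I]
  rw [this, Complex.exp_zero]

lemma exp_angle_zero : Complex.exp (Complex.I * angle 0) = 1 := by
  have : ((0 : ZMod 8)).val = 0 := rfl
  simp [angle, this]

lemma exp_angle_four : Complex.exp (Complex.I * angle 4) = -1 := by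
  have h : ((4 : ZMod 8)).val = 4 := rfl
  have : (Complex.I * (angle 4 : ℝ)) = Real.pi * Complex.I := by
    rw [angle, h]; push_cast; ring
  rw [this, Complex.exp_pi_mul_I]

lemma exp_angle_add_four (k : ZMod 8) :
    Complex.exp (Complex.I * angle (k + 4)) = - Complex.exp (Complex.I * angle k) := by
  have aux : ∀ a b : ℝ, b = a + Real.pi →
      Complex.exp (Complex.I * b) = - Complex.exp (Complex.I * a) := by
    intro a b hb
    rw [hb]; push_cast
    rw [mul_add, Complex.exp_add, mul_comm Complex.I (Real.pi : ℂ), Complex.exp_pi_mul_I]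
    ring
  have h : ∀ k : ZMod 8, (k + 4).val = k.val + 4 ∨ k.val = (k + 4).val + 4 := by decide
  rcases h k with h | h
  · exact aux _ _ (by rw [angle, angle, h]; push_cast; ring)
  · have := aux (angle (k + 4)) (angle k) (by rw [angle, angle, h]; push_cast; ring)
    rw [this]; ring

lemma pair_const {n : Type*} (u w : n → ℂ) (c : ℂ) (hc : c * conj c = 1) :
    outer (u + c • w) (u + c • w) + outer (u + (-c) • w) (u + (-c) • w)
      = (2 : ℂ) • outer u u + (2 : ℂ) • outer w w := by
  ext i j
  simp only [outer, Matrix.add_apply, Matrix.smul_apply, Matrix.of_apply, Pi.add_apply,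
    Pi.smul_apply, smul_eq_mul, _root_.map_add, _root_.map_mul, map_neg]
  linear_combination (2 * w i * conj (w j)) * hc

/-- constant parts of `T_Z` -/
def TZ0 : Matrix (Fin 2 × Fin 2) (Fin 2 × Fin 2) ℂ :=
  Matrix.diagonal fun p => if p = ((0 : Fin 2), (1 : Fin 2)) then 0 else 1

def TZ1 : Matrix (Fin 2 × Fin 2) (Fin 2 × Fin 2) ℂ :=
  Matrix.diagonal fun p => if p = ((0 : Fin 2), (1 : Fin 2)) then 1 else 0

lemma TZ_eq (ξ : ℝ) : TZ ξ = TZ0 + Complex.exp (Complex.I * ξ) • TZ1 := by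
  ext p q
  simp only [TZ, TZ0, TZ1, Matrix.diagonal, Matrix.add_apply, Matrix.smul_apply, Matrix.of_apply,
    smul_eq_mul]
  split_ifs <;> ring

def TX0 : Matrix (Fin 2 × Fin 2) (Fin 2 × Fin 2) ℂ :=
  (1 / 2 : ℂ) • (outer bell2 bell2 + outer bell4 bell4 + outer bell2 bell4 + outer bell4 bell2)
    + outer bell1 bell1 + outer bell3 bell3

def TX1 : Matrix (Fin 2 × Fin 2) (Fin 2 × Fin 2) ℂ :=
  (1 / 2 : ℂ) • (outer bell2 bell2 + outer bell4 bell4 - outer bell2 bell4 - outer bell4 bell2)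

lemma TX_eq (ξ : ℝ) : TX ξ = TX0 + Complex.exp (Complex.I * ξ) • TX1 := by
  ext p q
  simp only [TX, TX0, TX1, Matrix.add_apply, Matrix.smul_apply, Matrix.sub_apply, smul_eq_mul]
  ring

lemma mid_linear (A B : Matrix (Fin 2 × Fin 2) (Fin 2 × Fin 2) ℂ) (c : ℂ) :
    mid (A + c • B) = mid A + c • mid B := by
  ext a b
  simp only [mid, Matrix.add_apply, Matrix.smul_apply, Matrix.of_apply, smul_eq_mul]
  ring

def uZ16 : Fin 16 → ℂ := fun x => filterOp.mulVec ((mid TZ0).mulVec bellPair) (q4Equiv.symm x)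
def wZ16 : Fin 16 → ℂ := fun x => filterOp.mulVec ((mid TZ1).mulVec bellPair) (q4Equiv.symm x)
def uX16 : Fin 16 → ℂ := fun x => filterOp.mulVec ((mid TX0).mulVec bellPair) (q4Equiv.symm x)
def wX16 : Fin 16 → ℂ := fun x => filterOp.mulVec ((mid TX1).mulVec bellPair) (q4Equiv.symm x)

lemma DZ16_eq (ξ : ℝ) : DZ16 ξ = uZ16 + Complex.exp (Complex.I * ξ) • wZ16 := by
  funext x
  simp only [DZ16, DZ, TZ_eq, mid_linear, Matrix.add_mulVec, Matrix.smul_mulVec,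
    Matrix.mulVec_add, Matrix.mulVec_smul, uZ16, wZ16, Pi.add_apply, Pi.smul_apply, smul_eq_mul]

lemma DX16_eq (ξ : ℝ) : DX16 ξ = uX16 + Complex.exp (Complex.I * ξ) • wX16 := by
  funext x
  simp only [DX16, DX, TX_eq, mid_linear, Matrix.add_mulVec, Matrix.smul_mulVec,
    Matrix.mulVec_add, Matrix.mulVec_smul, uX16, wX16, Pi.add_apply, Pi.smul_apply, smul_eq_mul]

end Blindness

noncomputable section Blindness2
open Matrix Complex
open scoped ComplexConjugate

lemma rhoZ_pair (k : ZMod 8) : rhoZ k + rhoZ (k + 4) = rhoZ 0 + rhoZ 4 := by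
  have h := pair_const uZ16 wZ16 (Complex.exp (Complex.I * angle k)) (exp_mul_conj _)
  have h1 := pair_const uZ16 wZ16 1 (by simp)
  unfold rhoZ
  rw [DZ16_eq, DZ16_eq (angle (k + 4)), exp_angle_add_four, DZ16_eq, DZ16_eq,
    exp_angle_zero, exp_angle_four, h]
  rw [show (-1 : ℂ) = -(1 : ℂ) from rfl] at h1 ⊢
  rw [h1]

lemma rhoX_pair (k : ZMod 8) : rhoX k + rhoX (k + 4) = rhoX 0 + rhoX 4 := by
  have h := pair_const uX16 wX16 (Complex.exp (Complex.I * angle k)) (exp_mul_conj _)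
  have h1 := pair_const uX16 wX16 1 (by simp)
  unfold rhoX
  rw [DX16_eq, DX16_eq (angle (k + 4)), exp_angle_add_four, DX16_eq, DX16_eq,
    exp_angle_zero, exp_angle_four, h]
  rw [show (-1 : ℂ) = -(1 : ℂ) from rfl] at h1 ⊢
  rw [h1]

lemma sum_rho (F : ZMod 8 → Matrix (Fin 16) (Fin 16) ℂ)
    (hF : F = rhoZ ∨ F = rhoX) (a : ZMod 8) :
    (∑ s : ZMod 2, F (a - pad s)) = F 0 + F 4 := by
  have hsum : (∑ s : ZMod 2, F (a - pad s)) = F (a - pad 0) + F (a - pad 1) :=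
    Fin.sum_univ_two _
  have h0 : pad 0 = 0 := by decide
  have h1 : pad 1 = 4 := by decide
  have h4 : a - 4 = a + 4 := by
    have : (-4 : ZMod 8) = 4 := by decide
    rw [sub_eq_add_neg, this]
  rw [hsum, h0, h1, sub_zero, h4]
  rcases hF with h | h <;> rw [h]
  · exact rhoZ_pair a
  · exact rhoX_pair a

end Blindness2

/-- **the single-server protocol satisfies (S1).** With each system a Z-Dango or an
X-Dango family, and Alice's secret angles supported on a nonempty set `K`, the posterior of the
secret angles given the announced angles `φ` and any POVM outcome on all the Dango states is
uniform on `K`. -/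
theorem statement7 (L : ℕ) (hL : 1 ≤ L)
    (ρ : Fin L → ZMod 8 → Matrix (Fin 16) (Fin 16) ℂ)
    (hρ : ∀ l, ρ l = rhoZ ∨ ρ l = rhoX)
    (K : Finset (Fin L → ZMod 8)) (hK : K.Nonempty)
    (m : ℕ) (Pov : Fin m → Matrix (Fin L → Fin 16) (Fin L → Fin 16) ℂ)
    (hpos : ∀ j, (Pov j).PosSemidef) (hsum : (∑ j, Pov j) = 1)
    (θ : Fin L → ZMod 8) (hθ : θ ∈ K) (φ : Fin L → ZMod 8) (j : Fin m)
    (hden : (∑ θ' ∈ K, ∑ r : Fin L → ZMod 2,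
        (Pov j * tensorPow fun l => ρ l (φ l - θ' l - pad (r l))).trace) ≠ 0) :
    (∑ r : Fin L → ZMod 2, (Pov j * tensorPow fun l => ρ l (φ l - θ l - pad (r l))).trace) /
      (∑ θ' ∈ K, ∑ r : Fin L → ZMod 2,
        (Pov j * tensorPow fun l => ρ l (φ l - θ' l - pad (r l))).trace)
      = 1 / (K.card : ℂ) := by
  classical
  set N : ℂ := (Pov j * tensorPow fun l => (ρ l 0 + ρ l 4)).trace with hN
  have key : ∀ θ'' : Fin L → ZMod 8,
      (∑ r : Fin L → ZMod 2,
        (Pov j * tensorPow fun l => ρ l (φ l - θ'' l - pad (r l))).trace) = N := by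
    intro θ''
    rw [← Matrix.trace_sum, ← Finset.mul_sum, hN]
    congr 2
    ext x y
    rw [Matrix.sum_apply]
    simp only [tensorPow, Matrix.of_apply]
    rw [← Fintype.piFinset_univ]
    have hfac : ∀ l : Fin L, (ρ l 0 + ρ l 4) (x l) (y l)
        = ∑ s : ZMod 2, ρ l (φ l - θ'' l - pad s) (x l) (y l) := by
      intro l
      have hs := sum_rho (ρ l) (hρ l) (φ l - θ'' l)
      rw [← hs, Matrix.sum_apply]
    rw [Finset.prod_congr rfl fun l _ => hfac l]
    exact (Finset.prod_univ_sum (fun _ => (Finset.univ : Finset (ZMod 2)))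
      (fun l s => ρ l (φ l - θ'' l - pad s) (x l) (y l))).symm
  have hden2 : (∑ θ' ∈ K, ∑ r : Fin L → ZMod 2,
      (Pov j * tensorPow fun l => ρ l (φ l - θ' l - pad (r l))).trace)
      = (K.card : ℂ) * N := by
    rw [Finset.sum_congr rfl fun θ'' _ => key θ'', Finset.sum_const, nsmul_eq_mul]
  have hNne : N ≠ 0 := by
    intro h
    apply hden
    rw [hden2, h, mul_zero]
  have hcard : (K.card : ℂ) ≠ 0 := by
    exact_mod_cast Nat.cast_ne_zero.mpr (Finset.card_ne_zero_of_mem hθ)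
  rw [key θ, hden2, div_eq_div_iff (by exact mul_ne_zero hcard hNne) hcard]
  ring
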